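/- Let n ≥ 1, N ≥ 1, and let x : Fin n → (Fin N → ℝ) be a dataset with sample mean m_X and sample covariance matrix S_X, and assume S_X is positive definite. Then for every m ∈ ℝ^N and every positive definite N×N matrix Σ, −(1/n)∑ᵢ ln g_{m,Σ}(x i) ≥ −(1/n)∑ᵢ ln g_{m_X,S_X}(x i), and the minimal value equals (N/2)·(ln(2π) + 1) + (1/2)·ln(det S_X). -/

import Mathlib

open Matrix

/-- Multivariate Gaussian density. -/
noncomputable def mGaussPdf {N : ℕ} (m : Fin N → ℝ) (S : Matrix (Fin N) (Fin N) ℝ)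
    (t : Fin N → ℝ) : ℝ :=
  (2 * Real.pi) ^ (-(N : ℝ) / 2) * S.det ^ (-(1 : ℝ) / 2) *
    Real.exp (-(1 / 2) * ((t - m) ⬝ᵥ S⁻¹.mulVec (t - m)))

lemma MLE.trace_eq_sum_eigenvalues {N : ℕ} {A : Matrix (Fin N) (Fin N) ℝ} (hA : A.IsHermitian) :
    A.trace = ∑ i, hA.eigenvalues i := by
  conv_lhs => rw [hA.spectral_theorem]
  rw [Unitary.conjStarAlgAut_apply, Matrix.trace_mul_comm, ← Matrix.mul_assoc, Unitary.coe_star_mul_self, Matrix.one_mul,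
    Matrix.trace_diagonal]
  simp

lemma MLE.q_eq_trace {N : ℕ} (B : Matrix (Fin N) (Fin N) ℝ) (v : Fin N → ℝ) :
    v ⬝ᵥ B.mulVec v = (B * Matrix.vecMulVec v v).trace := by
  simp only [Matrix.trace, Matrix.diag, Matrix.mul_apply, Matrix.vecMulVec_apply, dotProduct,
    Matrix.mulVec, Finset.mul_sum, Finset.sum_mul]
  apply Finset.sum_congr rfl; intro i _
  apply Finset.sum_congr rfl; intro j _
  ring

open scoped MatrixOrder in
lemma MLE.key_ineq {N : ℕ} {S P : Matrix (Fin N) (Fin N) ℝ} (hS : S.PosDef) (hP : P.PosDef) :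
    Real.log S.det + (N : ℝ) ≤ Real.log P.det + (P⁻¹ * S).trace := by
  set R := CFC.sqrt S with hRdef
  have hR : R.PosSemidef := (CFC.sqrt_nonneg S).posSemidef
  have hRR : R * R = S := CFC.sqrt_mul_sqrt_self S hS.posSemidef.nonneg
  have hdetR : R.det ≠ 0 := by
    intro h
    have : S.det = 0 := by rw [← hRR, Matrix.det_mul, h, zero_mul]
    exact hS.det_pos.ne' this
  have hRsym : Rᵀ = R := by
    have := hR.1
    rwa [Matrix.IsHermitian, Matrix.conjTranspose_eq_transpose_of_trivial] at this
  have hPinv : P⁻¹.PosDef := hP.inv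
  have hApsd : (R * P⁻¹ * R).PosSemidef := by
    have h := hPinv.posSemidef.mul_mul_conjTranspose_same R
    rwa [Matrix.conjTranspose_eq_transpose_of_trivial, hRsym] at h
  have hA : (R * P⁻¹ * R).PosDef := by
    refine Matrix.PosDef.of_dotProduct_mulVec_pos hApsd.1 (fun y hy => ?_)
    have hRy : R *ᵥ y ≠ 0 := by
      intro h
      exact hy (Matrix.mulVec_injective_iff_isUnit.2
        ((Matrix.isUnit_iff_isUnit_det R).2 (Ne.isUnit hdetR)) (by simpa using h))
    have hpos2 := hPinv.dotProduct_mulVec_pos hRy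
    have hvm : y ᵥ* R = R *ᵥ y := by rw [← Matrix.mulVec_transpose, hRsym]
    have key : star y ⬝ᵥ (R * P⁻¹ * R) *ᵥ y = star (R *ᵥ y) ⬝ᵥ P⁻¹ *ᵥ (R *ᵥ y) := by
      rw [star_trivial, star_trivial, ← Matrix.mulVec_mulVec, ← Matrix.mulVec_mulVec,
        Matrix.dotProduct_mulVec, hvm]
    rw [key]
    exact hpos2
  have hAH := hA.isHermitian
  have hev : ∀ i, 0 < hAH.eigenvalues i := hA.eigenvalues_pos
  have htr : (R * P⁻¹ * R).trace = ∑ i, hAH.eigenvalues i := MLE.trace_eq_sum_eigenvalues hAH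
  have hdet : (R * P⁻¹ * R).det = ∏ i, hAH.eigenvalues i := by
    simpa using hAH.det_eq_prod_eigenvalues
  have htr2 : (R * P⁻¹ * R).trace = (P⁻¹ * S).trace := by
    rw [Matrix.trace_mul_comm, ← Matrix.mul_assoc, hRR, Matrix.trace_mul_comm]
  have hdet2 : (R * P⁻¹ * R).det = S.det / P.det := by
    rw [Matrix.det_mul, Matrix.det_mul, Matrix.det_nonsing_inv]
    have : R.det * R.det = S.det := by rw [← Matrix.det_mul, hRR]
    rw [mul_comm, ← mul_assoc]
    rw [Ring.inverse_eq_inv']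
    field_simp [this]
    rw [← this]; ring
  have hlogdet : Real.log (R * P⁻¹ * R).det = ∑ i, Real.log (hAH.eigenvalues i) := by
    rw [hdet, Real.log_prod]
    exact fun i _ => (hev i).ne'
  have hsum : ∑ i, (1 + Real.log (hAH.eigenvalues i)) ≤ ∑ i, hAH.eigenvalues i := by
    apply Finset.sum_le_sum
    intro i _
    have := Real.log_le_sub_one_of_pos (hev i)
    linarith
  have hcard : ∑ _i : Fin N, (1 : ℝ) = (N : ℝ) := by simp
  have hineq : (N : ℝ) + Real.log (R * P⁻¹ * R).det ≤ (P⁻¹ * S).trace := by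
    rw [hlogdet, ← htr2, htr, ← hcard, ← Finset.sum_add_distrib]
    exact hsum
  have hlog2 : Real.log (R * P⁻¹ * R).det = Real.log S.det - Real.log P.det := by
    rw [hdet2, Real.log_div hS.det_pos.ne' hP.det_pos.ne']
  linarith [hineq, hlog2.le, hlog2.ge]

lemma MLE.sum_dot {n N : ℕ} (a : Fin n → Fin N → ℝ) (w : Fin N → ℝ) :
    ∑ i, a i ⬝ᵥ w = (∑ i, a i) ⬝ᵥ w := by
  simp only [dotProduct, Finset.sum_apply, Finset.sum_mul]
  rw [Finset.sum_comm]

lemma MLE.log_mGaussPdf {N : ℕ} (m : Fin N → ℝ) (S : Matrix (Fin N) (Fin N) ℝ) (t : Fin N → ℝ)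
    (hS : S.PosDef) :
    Real.log (mGaussPdf m S t) =
      -((N : ℝ) / 2) * Real.log (2 * Real.pi) - (1 / 2) * Real.log S.det
        - (1 / 2) * ((t - m) ⬝ᵥ S⁻¹.mulVec (t - m)) := by
  have h2pi : (0 : ℝ) < 2 * Real.pi := by positivity
  have h1 : (0 : ℝ) < (2 * Real.pi) ^ (-(N : ℝ) / 2) := Real.rpow_pos_of_pos h2pi _
  have h2 : (0 : ℝ) < S.det ^ (-(1 : ℝ) / 2) := Real.rpow_pos_of_pos hS.det_pos _
  unfold mGaussPdf
  rw [Real.log_mul (by positivity) (Real.exp_ne_zero _), Real.log_mul h1.ne' h2.ne',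
    Real.log_rpow h2pi, Real.log_rpow hS.det_pos, Real.log_exp]
  ring

lemma MLE.sum_quad {n N : ℕ} (x : Fin n → Fin N → ℝ) (mX : Fin N → ℝ)
    (hsum0 : ∑ i, (x i - mX) = 0) (SX : Matrix (Fin N) (Fin N) ℝ)
    (hSX : SX = (1 / (n : ℝ)) • ∑ i, Matrix.vecMulVec (x i - mX) (x i - mX))
    (hn0 : (0 : ℝ) < n)
    (B : Matrix (Fin N) (Fin N) ℝ) (m : Fin N → ℝ) :
    ∑ i, (x i - m) ⬝ᵥ B.mulVec (x i - m)
      = n * (B * SX).trace + n * ((mX - m) ⬝ᵥ B.mulVec (mX - m)) := by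
  set c := mX - m with hc
  have hsplit : ∀ i : Fin n, (x i - m) ⬝ᵥ B.mulVec (x i - m)
      = (x i - mX) ⬝ᵥ B.mulVec (x i - mX) + (x i - mX) ⬝ᵥ B.mulVec c
        + ((c ᵥ* B) ⬝ᵥ (x i - mX) + c ⬝ᵥ B.mulVec c) := by
    intro i
    have h : x i - m = (x i - mX) + c := by rw [hc, sub_add_sub_cancel]
    rw [h, Matrix.mulVec_add, dotProduct_add, add_dotProduct, add_dotProduct,
      Matrix.dotProduct_mulVec c B (x i - mX)]
    ring
  rw [Finset.sum_congr rfl (fun i _ => hsplit i), Finset.sum_add_distrib,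
    Finset.sum_add_distrib, Finset.sum_add_distrib]
  have h1 : ∑ i, (x i - mX) ⬝ᵥ B.mulVec c = 0 := by
    rw [MLE.sum_dot, hsum0, zero_dotProduct]
  have h2 : ∑ i, (c ᵥ* B) ⬝ᵥ (x i - mX) = 0 := by
    simp only [dotProduct_comm (c ᵥ* B)]
    rw [MLE.sum_dot, hsum0, zero_dotProduct]
  have h3 : ∑ i, (x i - mX) ⬝ᵥ B.mulVec (x i - mX) = n * (B * SX).trace := by
    simp only [MLE.q_eq_trace]
    rw [← Matrix.trace_sum, ← Finset.mul_sum]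
    have hv : ∑ i, Matrix.vecMulVec (x i - mX) (x i - mX) = (n : ℝ) • SX := by
      rw [hSX, smul_smul, mul_one_div, div_self hn0.ne', one_smul]
    rw [hv, Matrix.mul_smul, Matrix.trace_smul, smul_eq_mul]
  have h4 : ∑ _i : Fin n, c ⬝ᵥ B.mulVec c = n * (c ⬝ᵥ B.mulVec c) := by
    rw [Finset.sum_const, Finset.card_univ, Fintype.card_fin, nsmul_eq_mul]
  rw [h1, h2, h3, h4]
  ring

/-- The maximum likelihood Gaussian `(m_X, S_X)` minimizes the empirical
cross-entropy, with minimal value `(N/2)(ln(2π) + 1) + (1/2) ln det S_X`. -/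
theorem mle_minimizes_crossEntropy
    (n N : ℕ) (hn : 1 ≤ n) (hN : 1 ≤ N)
    (x : Fin n → (Fin N → ℝ))
    (mX : Fin N → ℝ) (hmX : mX = (1 / (n : ℝ)) • ∑ i, x i)
    (SX : Matrix (Fin N) (Fin N) ℝ)
    (hSX : SX = (1 / (n : ℝ)) • ∑ i, Matrix.vecMulVec (x i - mX) (x i - mX))
    (hpos : SX.PosDef) :
    (∀ (m : Fin N → ℝ) (Sig : Matrix (Fin N) (Fin N) ℝ), Sig.PosDef →
        -(1 / (n : ℝ)) * ∑ i, Real.log (mGaussPdf mX SX (x i)) ≤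
          -(1 / (n : ℝ)) * ∑ i, Real.log (mGaussPdf m Sig (x i))) ∧
      -(1 / (n : ℝ)) * ∑ i, Real.log (mGaussPdf mX SX (x i)) =
        ((N : ℝ) / 2) * (Real.log (2 * Real.pi) + 1) + (1 / 2) * Real.log SX.det := by
  have hn0 : (0 : ℝ) < n := by exact_mod_cast hn
  have hne : (n : ℝ) ≠ 0 := hn0.ne'
  have hsum0 : ∑ i, (x i - mX) = (0 : Fin N → ℝ) := by
    rw [Finset.sum_sub_distrib, Finset.sum_const, Finset.card_univ, Fintype.card_fin, hmX,
      ← Nat.cast_smul_eq_nsmul ℝ, smul_smul, mul_one_div, div_self hne, one_smul, sub_self]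
  have hCE : ∀ (m : Fin N → ℝ) (Sig : Matrix (Fin N) (Fin N) ℝ), Sig.PosDef →
      -(1 / (n : ℝ)) * ∑ i, Real.log (mGaussPdf m Sig (x i))
        = ((N : ℝ) / 2) * Real.log (2 * Real.pi) + (1 / 2) * Real.log Sig.det
          + (1 / 2) * (Sig⁻¹ * SX).trace
          + (1 / 2) * ((mX - m) ⬝ᵥ Sig⁻¹.mulVec (mX - m)) := by
    intro m Sig hSig
    have hlog : ∀ i, Real.log (mGaussPdf m Sig (x i)) =
        (-((N : ℝ) / 2) * Real.log (2 * Real.pi) - (1 / 2) * Real.log Sig.det)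
          - (1 / 2) * ((x i - m) ⬝ᵥ Sig⁻¹.mulVec (x i - m)) := fun i =>
      MLE.log_mGaussPdf m Sig (x i) hSig
    rw [Finset.sum_congr rfl (fun i _ => hlog i), Finset.sum_sub_distrib, Finset.sum_const,
      Finset.card_univ, Fintype.card_fin, ← Finset.mul_sum,
      MLE.sum_quad x mX hsum0 SX hSX hn0 Sig⁻¹ m, nsmul_eq_mul]
    field_simp
    ring
  have hinvSX : SX⁻¹ * SX = 1 := Matrix.nonsing_inv_mul SX hpos.det_pos.ne'.isUnit
  have htrN : (SX⁻¹ * SX).trace = (N : ℝ) := by rw [hinvSX, Matrix.trace_one]; simp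
  have hq0 : (mX - mX) ⬝ᵥ SX⁻¹.mulVec (mX - mX) = 0 := by simp
  constructor
  · intro m Sig hSig
    rw [hCE mX SX hpos, hCE m Sig hSig, htrN, hq0]
    have hkey := MLE.key_ineq hpos hSig
    have hqc : 0 ≤ (mX - m) ⬝ᵥ Sig⁻¹.mulVec (mX - m) := by
      have := hSig.inv.posSemidef.dotProduct_mulVec_nonneg (mX - m)
      simpa using this
    linarith
  · rw [hCE mX SX hpos, htrN, hq0]
    ring
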